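/- arXiv:1302.5073 — 3 statements merged into one kernel-verified Lean document; each statement's English description precedes it below -/
import Mathlib

section
/- For every x in the open unit ball of ℝ^n (n ≥ 2) and every 0 < α < 1, the surface integral ∫_{|y|=1} |x−y|^{α−n} dσ(y) is bounded by C (1−|x|)^{α−1}, where C depends only on n and α. -/
/-!
The unit sphere `S` is upper Ahlfors regular of dimension `n - 1`: a cap of radius `r ≤ 1/2`
around `p ∈ S` is the image, under the radial projection `z ↦ z / ‖z‖` (which is 2-Lipschitz on
`{1 ≤ ‖z‖}`), of the tangent disk of radius `2r` at `p`; hence `μH[n-1] (S ∩ B(x, r)) ≤ A r^(n-1)`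
for all `x` and `r`. With `δ = 1 - ‖x‖`, cut `S` into the shells `2^k δ ≤ ‖x - y‖ ≤ 2^(k+1) δ`:
on the `k`-th one the integrand is at most `(2^k δ)^(α-n)` and the measure at most
`A (2^(k+1) δ)^(n-1)`, so the integral is bounded by a geometric series of ratio `2^(α-1) < 1`
times `δ^(α-1)`.
-/

open MeasureTheory Metric Module
open scoped RealInnerProductSpace NNReal ENNReal

theorem lintegral_rpow_dist_le_of_measure_inter_closedBall_le {X : Type*} [PseudoMetricSpace X]
    [MeasurableSpace X] {μ : Measure X} {s : Set X} {x : X} {A : ℝ≥0} {d β δ : ℝ} (hd : 0 ≤ d)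
    (hβd : β + d < 0) (hδ : 0 < δ) (hs : ∀ y ∈ s, δ ≤ dist x y)
    (hA : ∀ r, 0 < r → μ (s ∩ closedBall x r) ≤ A * ENNReal.ofReal (r ^ d)) :
    ∫⁻ y in s, ENNReal.ofReal (dist x y ^ β) ∂μ ≤
      ENNReal.ofReal (A * 2 ^ d / (1 - 2 ^ (β + d)) * δ ^ (β + d)) := by
  set q : ℝ := 2 ^ (β + d)
  have hq₀ : 0 ≤ q := by positivity
  have hq₁ : q < 1 := Real.rpow_lt_one_of_one_lt_of_neg one_lt_two hβd
  let annulus : ℕ → Set X := fun k => {y ∈ s | 2 ^ k * δ ≤ dist x y ∧ dist x y ≤ 2 ^ (k + 1) * δ}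
  have hcover : s ⊆ ⋃ k, annulus k := fun y hy => by
    obtain ⟨k, hk, hk'⟩ := exists_nat_pow_near ((one_le_div hδ).2 (hs y hy)) one_lt_two
    exact Set.mem_iUnion.2 ⟨k, hy, (le_div_iff₀ hδ).1 hk, ((div_lt_iff₀ hδ).1 hk').le⟩
  have hterm (k : ℕ) :
      ((2 : ℝ) ^ k * δ) ^ β * ((2 : ℝ) ^ (k + 1) * δ) ^ d = 2 ^ d * δ ^ (β + d) * q ^ k := by
    rw [show q = 2 ^ β * 2 ^ d from Real.rpow_add two_pos _ _, Real.mul_rpow (by positivity) hδ.le,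
      Real.mul_rpow (by positivity) hδ.le, ← Real.rpow_pow_comm zero_le_two, ← Real.rpow_pow_comm zero_le_two,
      Real.rpow_add hδ, mul_pow, pow_succ]
    ring
  have hannulus (k : ℕ) : ∫⁻ y in annulus k, ENNReal.ofReal (dist x y ^ β) ∂μ ≤
      A * ENNReal.ofReal (2 ^ d * δ ^ (β + d) * q ^ k) :=
    calc ∫⁻ y in annulus k, ENNReal.ofReal (dist x y ^ β) ∂μ
        ≤ ∫⁻ _ in annulus k, ENNReal.ofReal (((2 : ℝ) ^ k * δ) ^ β) ∂μ :=
          setLIntegral_mono measurable_const fun y hy => ENNReal.ofReal_le_ofReal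
            (Real.rpow_le_rpow_of_nonpos (by positivity) hy.2.1 (by linarith))
      _ = ENNReal.ofReal (((2 : ℝ) ^ k * δ) ^ β) * μ (annulus k) := setLIntegral_const _ _
      _ ≤ ENNReal.ofReal (((2 : ℝ) ^ k * δ) ^ β) *
            (A * ENNReal.ofReal (((2 : ℝ) ^ (k + 1) * δ) ^ d)) := by
          gcongr
          exact (measure_mono fun y (hy : y ∈ annulus k) =>
            (⟨hy.1, mem_closedBall'.2 hy.2.2⟩ : y ∈ s ∩ closedBall x _)).trans
            (hA _ (by positivity))
      _ = A * ENNReal.ofReal (2 ^ d * δ ^ (β + d) * q ^ k) := by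
          rw [← hterm, ENNReal.ofReal_mul (by positivity)]
          ring
  calc ∫⁻ y in s, ENNReal.ofReal (dist x y ^ β) ∂μ
      ≤ ∫⁻ y in ⋃ k, annulus k, ENNReal.ofReal (dist x y ^ β) ∂μ := lintegral_mono_set hcover
    _ ≤ ∑' k, ∫⁻ y in annulus k, ENNReal.ofReal (dist x y ^ β) ∂μ := lintegral_iUnion_le _ _
    _ ≤ ∑' k, A * ENNReal.ofReal (2 ^ d * δ ^ (β + d) * q ^ k) := ENNReal.tsum_le_tsum hannulus
    _ = A * ENNReal.ofReal (∑' k, 2 ^ d * δ ^ (β + d) * q ^ k) := by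
        rw [ENNReal.tsum_mul_left, ENNReal.ofReal_tsum_of_nonneg (fun k => by positivity)
          ((summable_geometric_of_lt_one hq₀ hq₁).mul_left _)]
    _ = ENNReal.ofReal (A * 2 ^ d / (1 - q) * δ ^ (β + d)) := by
        rw [tsum_mul_left, tsum_geometric_of_lt_one hq₀ hq₁, ← ENNReal.ofReal_coe_nnreal,
          ← ENNReal.ofReal_mul A.coe_nonneg]
        congr 1
        ring

theorem lipschitzOnWith_inv_norm_smul {F : Type*} [NormedAddCommGroup F] [NormedSpace ℝ F] :
    LipschitzOnWith 2 (fun z : F => ‖z‖⁻¹ • z) {z | 1 ≤ ‖z‖} := by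
  refine LipschitzOnWith.of_dist_le_mul fun z (hz : 1 ≤ ‖z‖) w (hw : 1 ≤ ‖w‖) => ?_
  have hz₀ : 0 < ‖z‖ := one_pos.trans_le hz
  have hw₀ : 0 < ‖w‖ := one_pos.trans_le hw
  have hsplit : ‖z‖⁻¹ • z - ‖w‖⁻¹ • w = ‖z‖⁻¹ • (z - w) + ((‖w‖ - ‖z‖) / ‖z‖) • (‖w‖⁻¹ • w) := by
    have : (‖w‖ - ‖z‖) / ‖z‖ * ‖w‖⁻¹ = ‖z‖⁻¹ - ‖w‖⁻¹ := by field_simp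
    rw [smul_smul, this, smul_sub, sub_smul]
    abel
  have h₁ : ‖‖z‖⁻¹ • (z - w)‖ ≤ ‖z - w‖ := by
    rw [norm_smul, norm_inv, norm_norm]
    exact mul_le_of_le_one_left (norm_nonneg _) (inv_le_one_of_one_le₀ hz)
  have h₂ : ‖((‖w‖ - ‖z‖) / ‖z‖) • (‖w‖⁻¹ • w)‖ ≤ ‖z - w‖ := by
    rw [norm_smul, norm_smul, norm_inv, norm_norm, inv_mul_cancel₀ hw₀.ne', mul_one, norm_div,
      norm_norm, Real.norm_eq_abs]
    calc |‖w‖ - ‖z‖| / ‖z‖ ≤ |‖w‖ - ‖z‖| := div_le_self (abs_nonneg _) hz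
      _ ≤ ‖z - w‖ := by rw [abs_sub_comm]; exact abs_norm_sub_norm_le z w
  rw [dist_eq_norm, dist_eq_norm, hsplit, NNReal.coe_ofNat, two_mul]
  exact (norm_add_le _ _).trans (add_le_add h₁ h₂)

variable {E : Type*} [NormedAddCommGroup E] [InnerProductSpace ℝ E]

theorem exists_inner_eq_zero_inv_norm_smul_add_eq {p y : E} (hp : ‖p‖ = 1) (hy : ‖y‖ = 1)
    (hyp : ‖y - p‖ ≤ 1 / 2) :
    ∃ w, ⟪p, w⟫ = 0 ∧ ‖w‖ ≤ 2 * ‖y - p‖ ∧ ‖p + w‖⁻¹ • (p + w) = y := by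
  set c := ⟪p, y⟫
  have hdist : ‖y - p‖ ^ 2 = 2 - 2 * c := by
    rw [norm_sub_sq_real, hy, hp, real_inner_comm]; ring
  have hc : 7 / 8 ≤ c := by nlinarith [norm_nonneg (y - p)]
  have hc₁ : c ≤ 1 := by nlinarith
  have hc₀ : 0 < c := by linarith
  -- `p + w = c⁻¹ • y` is where the ray through `y` meets the tangent plane at `p`.
  have hpy : p + (c⁻¹ • y - p) = c⁻¹ • y := add_sub_cancel _ _
  refine ⟨c⁻¹ • y - p, ?_, ?_, ?_⟩
  · rw [inner_sub_right, real_inner_smul_right, inv_mul_cancel₀ hc₀.ne',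
      real_inner_self_eq_norm_sq, hp]
    norm_num
  · have hw : ‖c⁻¹ • y - p‖ ^ 2 = c⁻¹ ^ 2 - 1 := by
      rw [norm_sub_sq_real, norm_smul, real_inner_smul_left, real_inner_comm, hy, hp,
        Real.norm_eq_abs, abs_of_pos (inv_pos.2 hc₀)]
      field_simp
      ring
    have hc' : c⁻¹ ≤ 8 / 7 := by rw [inv_le_comm₀ hc₀ (by norm_num)]; linarith
    have : c⁻¹ ^ 2 - 1 ≤ 4 * (2 - 2 * c) := by
      have := mul_inv_cancel₀ hc₀.ne'
      nlinarith [inv_pos.2 hc₀]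
    refine (pow_le_pow_iff_left₀ (norm_nonneg _) (by positivity) two_ne_zero).1 ?_
    rw [hw, mul_pow, hdist]
    linarith
  · rw [hpy, norm_smul, hy, mul_one, Real.norm_eq_abs, abs_of_pos (inv_pos.2 hc₀), inv_inv,
      smul_smul, mul_inv_cancel₀ hc₀.ne', one_smul]

variable [MeasurableSpace E] [BorelSpace E] {m : ℕ} [Fact (finrank ℝ E = m + 1)]

theorem hausdorffMeasure_sphere_inter_closedBall_le {p : E} (hp : ‖p‖ = 1) {r : ℝ} (hr₀ : 0 ≤ r)
    (hr : r ≤ 1 / 2) :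
    μH[m] (sphere (0 : E) 1 ∩ closedBall p r) ≤
      2 ^ m * ENNReal.ofReal ((2 * r) ^ m) *
        μH[m] (closedBall (0 : EuclideanSpace ℝ (Fin m)) 1) := by
  let b := OrthonormalBasis.fromOrthogonalSpanSingleton (𝕜 := ℝ) m (ne_zero_of_norm_ne_zero
    (by simp [hp]) : p ≠ 0)
  let g : EuclideanSpace ℝ (Fin m) → E := fun v => p + (b.repr.symm v : E)
  have hg_lip : LipschitzWith 1 g := ((IsometryEquiv.addLeft p).isometry.comp
    (isometry_subtype_coe.comp b.repr.symm.isometry)).lipschitz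
  have hg_norm : ∀ v, 1 ≤ ‖g v‖ := fun v => by
    have h := norm_add_sq_eq_norm_sq_add_norm_sq_real
      (Submodule.mem_orthogonal_singleton_iff_inner_right.1 (b.repr.symm v).2)
    rw [hp] at h
    nlinarith [norm_nonneg (g v), mul_self_nonneg ‖(b.repr.symm v : E)‖]
  have hcap : sphere (0 : E) 1 ∩ closedBall p r ⊆
      ((fun z : E => ‖z‖⁻¹ • z) ∘ g) '' closedBall 0 (2 * r) := by
    rintro y ⟨hy, hyp⟩
    rw [mem_sphere_zero_iff_norm] at hy
    rw [mem_closedBall, dist_eq_norm] at hyp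
    obtain ⟨w, hw, hwy, rfl⟩ := exists_inner_eq_zero_inv_norm_smul_add_eq hp hy (hyp.trans hr)
    let w' : (ℝ ∙ p)ᗮ := ⟨w, Submodule.mem_orthogonal_singleton_iff_inner_right.2 hw⟩
    refine ⟨b.repr w', ?_, ?_⟩
    · rw [mem_closedBall_zero_iff, LinearIsometryEquiv.norm_map]
      exact hwy.trans (by linarith)
    · simp [g, w']
  calc μH[m] (sphere (0 : E) 1 ∩ closedBall p r)
      ≤ μH[m] (((fun z : E => ‖z‖⁻¹ • z) ∘ g) '' closedBall 0 (2 * r)) := measure_mono hcap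
    _ ≤ ((2 * 1 : ℝ≥0) : ℝ≥0∞) ^ (m : ℝ) *
          μH[m] (closedBall (0 : EuclideanSpace ℝ (Fin m)) (2 * r)) :=
      (lipschitzOnWith_inv_norm_smul.comp hg_lip.lipschitzOnWith
        fun v _ => hg_norm v).hausdorffMeasure_image_le (Nat.cast_nonneg m)
    _ = _ := by
      rw [Measure.addHaar_closedBall' _ _ (by positivity), finrank_euclideanSpace_fin]
      simp [mul_assoc]

theorem hausdorffMeasure_sphere_lt_top : μH[m] (sphere (0 : E) 1) < ∞ := by
  have : FiniteDimensional ℝ E := .of_fact_finrank_eq_succ m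
  obtain ⟨t, htS, ht, hcover⟩ :=
    finite_cover_balls_of_compact (isCompact_sphere (0 : E) 1) (by norm_num : (0 : ℝ) < 1 / 2)
  have hsub : sphere (0 : E) 1 ⊆ ⋃ p ∈ t, sphere (0 : E) 1 ∩ closedBall p (1 / 2) := fun y hy => by
    obtain ⟨p, hp, hyp⟩ := Set.mem_iUnion₂.1 (hcover hy)
    exact Set.mem_iUnion₂.2 ⟨p, hp, hy, ball_subset_closedBall hyp⟩
  refine (measure_mono hsub).trans_lt (measure_biUnion_lt_top ht fun p hp => ?_)
  refine (hausdorffMeasure_sphere_inter_closedBall_le (mem_sphere_zero_iff_norm.1 (htS hp))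
    (by norm_num) le_rfl).trans_lt ?_
  exact ENNReal.mul_lt_top (by simp) measure_closedBall_lt_top

theorem exists_hausdorffMeasure_sphere_inter_closedBall_le :
    ∃ A : ℝ≥0, 0 < A ∧ ∀ (x : E) (r : ℝ), 0 < r →
      μH[m] (sphere (0 : E) 1 ∩ closedBall x r) ≤ A * ENNReal.ofReal (r ^ m) := by
  set B := μH[m] (closedBall (0 : EuclideanSpace ℝ (Fin m)) 1)
  set M := μH[m] (sphere (0 : E) 1)
  have hK : 8 ^ m * B + 4 ^ m * M ≠ ∞ := by
    have : B < ∞ := measure_closedBall_lt_top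
    have : M < ∞ := hausdorffMeasure_sphere_lt_top
    finiteness
  refine ⟨(8 ^ m * B + 4 ^ m * M).toNNReal + 1, by positivity, fun x r hr => ?_⟩
  have h4r : ENNReal.ofReal ((4 * r) ^ m) = 4 ^ m * ENNReal.ofReal (r ^ m) := by
    rw [mul_pow, ENNReal.ofReal_mul (by positivity), ENNReal.ofReal_pow (by norm_num)]
    norm_num
  calc μH[m] (sphere (0 : E) 1 ∩ closedBall x r)
      ≤ (8 ^ m * B + 4 ^ m * M) * ENNReal.ofReal (r ^ m) := ?_
    _ ≤ _ := by
      gcongr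
      rw [ENNReal.coe_add, ENNReal.coe_toNNReal hK]
      exact le_self_add
  rcases le_or_gt r (1 / 4) with hr_small | hr_large
  · rcases (sphere (0 : E) 1 ∩ closedBall x r).eq_empty_or_nonempty with h | ⟨p, hp, hpx⟩
    · simp [h]
    calc μH[m] (sphere (0 : E) 1 ∩ closedBall x r)
        ≤ μH[m] (sphere (0 : E) 1 ∩ closedBall p (2 * r)) :=
          measure_mono (Set.inter_subset_inter_right _ (closedBall_subset_closedBall' (by
            linarith [mem_closedBall'.1 hpx])))
      _ ≤ 2 ^ m * ENNReal.ofReal ((2 * (2 * r)) ^ m) * B :=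
          hausdorffMeasure_sphere_inter_closedBall_le (mem_sphere_zero_iff_norm.1 hp)
            (by positivity) (by linarith)
      _ = 8 ^ m * B * ENNReal.ofReal (r ^ m) := by
          rw [show 2 * (2 * r) = 4 * r by ring, h4r, show (8 : ℝ≥0∞) = 2 * 4 by norm_num, mul_pow]
          ring
      _ ≤ _ := by gcongr; exact le_self_add
  · calc μH[m] (sphere (0 : E) 1 ∩ closedBall x r) ≤ M := measure_mono Set.inter_subset_left
      _ ≤ 4 ^ m * M * ENNReal.ofReal (r ^ m) := by
          rw [mul_comm _ M, mul_assoc, ← h4r]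
          exact le_mul_of_one_le_right' (ENNReal.one_le_ofReal.2 (one_le_pow₀ (by linarith)))
      _ ≤ _ := by gcongr; exact le_add_self

theorem stmt_5_general (n : ℕ) (hn : 2 ≤ n) (α : ℝ) (hα1 : α < 1) :
    ∃ C > 0, ∀ x : EuclideanSpace ℝ (Fin n), ‖x‖ < 1 →
      (∫ y in sphere (0 : EuclideanSpace ℝ (Fin n)) 1, ‖x - y‖ ^ (α - n)
          ∂μH[(n : ℝ) - 1])
        ≤ C * (1 - ‖x‖) ^ (α - 1) := by
  obtain ⟨m, rfl⟩ : ∃ m, n = m + 1 := ⟨n - 1, by omega⟩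
  have : Fact (finrank ℝ (EuclideanSpace ℝ (Fin (m + 1))) = m + 1) := ⟨finrank_euclideanSpace_fin⟩
  obtain ⟨A, hA₀, hA⟩ := exists_hausdorffMeasure_sphere_inter_closedBall_le
    (E := EuclideanSpace ℝ (Fin (m + 1))) (m := m)
  have hexp : α - (m + 1 : ℕ) + m = α - 1 := by push_cast; ring
  have hq : (2 : ℝ) ^ (α - 1) < 1 := Real.rpow_lt_one_of_one_lt_of_neg one_lt_two (by linarith)
  refine ⟨A * 2 ^ (m : ℝ) / (1 - 2 ^ (α - 1)), by have := sub_pos.2 hq; positivity, fun x hx => ?_⟩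
  have hbound := lintegral_rpow_dist_le_of_measure_inter_closedBall_le (μ := μH[m])
    (s := sphere 0 1) (x := x) (β := α - (m + 1 : ℕ)) m.cast_nonneg (by rw [hexp]; linarith) (sub_pos.2 hx)
    (fun y hy => by
      rw [mem_sphere_zero_iff_norm] at hy
      rw [dist_comm, dist_eq_norm, ← hy]
      exact norm_sub_norm_le y x)
    (fun r hr => by simpa only [Real.rpow_natCast] using hA x r hr)
  rw [hexp] at hbound
  rw [show ((m + 1 : ℕ) : ℝ) - 1 = m by push_cast; ring,
    integral_eq_lintegral_of_nonneg_ae (ae_of_all _ fun y => by positivity)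
      (by fun_prop : Measurable _).aestronglyMeasurable]
  simp_rw [← dist_eq_norm]
  exact ENNReal.toReal_le_of_le_ofReal (by have := sub_pos.2 hq; positivity) hbound

theorem stmt_5 (n : ℕ) (hn : 2 ≤ n) (α : ℝ) (hα0 : 0 < α) (hα1 : α < 1) :
    ∃ C > 0, ∀ x : EuclideanSpace ℝ (Fin n), ‖x‖ < 1 →
      (∫ y in sphere (0 : EuclideanSpace ℝ (Fin n)) 1, ‖x - y‖ ^ (α - n)
          ∂μH[(n : ℝ) - 1])
        ≤ C * (1 - ‖x‖) ^ (α - 1) :=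
  stmt_5_general n hn α hα1
end

section
/- Let 0 < α < 1, and let f ∈ C^{k,α}(closure of B_R) in ℝ^n satisfy D^β f(0) = 0 for all multi-indices β with |β| ≤ k−1. Then for any l ≤ k, ‖f‖_α^{(l)} ≤ C R^{k−l} ‖f‖_α^{(k)}, where ‖f‖_α^{(j)} = sup_{|β|=j} (‖D^β f‖_∞ + R^α H_α[D^β f]) and C depends only on n, k, α. -/
open MeasureTheory Metric

noncomputable section

def ee {n : ℕ} (i : Fin n) : EuclideanSpace ℝ (Fin n) := EuclideanSpace.single i 1

/-- Sup norm of `g` over `s`. -/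
def supN {n : ℕ} (s : Set (EuclideanSpace ℝ (Fin n)))
    (g : EuclideanSpace ℝ (Fin n) → ℝ) : ℝ :=
  sSup ((fun x => |g x|) '' s)

/-- Hölder seminorm `H_α[g]` of `g` over `s`. -/
def holdN {n : ℕ} (α : ℝ) (s : Set (EuclideanSpace ℝ (Fin n)))
    (g : EuclideanSpace ℝ (Fin n) → ℝ) : ℝ :=
  sSup {c | ∃ x ∈ s, ∃ y ∈ s, x ≠ y ∧ c = |g x - g y| / ‖x - y‖ ^ α}

/-- The multi-index-`v` partial derivative of order `j` within `s`. -/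
def derivMulti {n : ℕ} (j : ℕ) (v : Fin j → Fin n)
    (f : EuclideanSpace ℝ (Fin n) → ℝ) (s : Set (EuclideanSpace ℝ (Fin n)))
    (x : EuclideanSpace ℝ (Fin n)) : ℝ :=
  iteratedFDerivWithin ℝ j f s x (fun i => ee (v i))

/-- The norm `‖f‖_α^{(j)} = sup_{|β|=j} (‖D^β f‖_∞ + R^α H_α[D^β f])` over the closed ball. -/
def jNorm (n : ℕ) (R α : ℝ) (j : ℕ) (f : EuclideanSpace ℝ (Fin n) → ℝ) : ℝ :=
  ⨆ v : Fin j → Fin n,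
    (supN (closedBall (0 : EuclideanSpace ℝ (Fin n)) R) (derivMulti j v f (closedBall 0 R)) +
      R ^ α * holdN α (closedBall (0 : EuclideanSpace ℝ (Fin n)) R)
        (derivMulti j v f (closedBall 0 R)))

/-! A derivative of order `j < k` vanishes at the centre and, by the mean value inequality, is
Lipschitz on the ball with a constant controlled by the sup norms of the derivatives of order
`j + 1`. So it is bounded by `R` times that constant, and, the ball having diameter `2R`, its
`α`-Hölder seminorm weighted by `R^α` is at most `2R` times it. Each order thus costs a factor `R`,
and iterating from `l` up to `k` gives `R^(k-l)`. -/

theorem ContinuousMultilinearMap.norm_le_card_pow_mul_of_apply_single_le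
    {𝕜 ι F : Type*} [RCLike 𝕜] [Fintype ι] [DecidableEq ι] [NormedAddCommGroup F]
    [NormedSpace 𝕜 F] {j : ℕ}
    (A : ContinuousMultilinearMap 𝕜 (fun _ : Fin j => EuclideanSpace 𝕜 ι) F)
    {T : ℝ} (hT : 0 ≤ T) (h : ∀ w : Fin j → ι, ‖A fun i => EuclideanSpace.single (w i) 1‖ ≤ T) :
    ‖A‖ ≤ (Fintype.card ι : ℝ) ^ j * T := by
  refine A.opNorm_le_bound (by positivity) fun m => ?_
  have hm : m = fun i => ∑ c, m i c • EuclideanSpace.single c (1 : 𝕜) :=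
    funext fun i => by simpa using ((EuclideanSpace.basisFun ι 𝕜).sum_repr (m i)).symm
  calc ‖A m‖ = ‖∑ w : Fin j → ι, A fun i => m i (w i) • EuclideanSpace.single (w i) 1‖ := by
        conv_lhs => rw [hm, A.map_sum]
    _ ≤ ∑ _w : Fin j → ι, T * ∏ i, ‖m i‖ := by
        refine (norm_sum_le _ _).trans (Finset.sum_le_sum fun w _ => ?_)
        rw [A.map_smul_univ, norm_smul, norm_prod, mul_comm]
        exact mul_le_mul (h w) (Finset.prod_le_prod (fun _ _ => norm_nonneg _)
          fun i _ => PiLp.norm_apply_le (m i) (w i)) (by positivity) hT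
    _ = (Fintype.card ι : ℝ) ^ j * T * ∏ i, ‖m i‖ := by
        simp [Finset.card_univ, mul_assoc]

theorem uniqueDiffOn_closedBall {E : Type*} [NormedAddCommGroup E] [NormedSpace ℝ E] (x : E)
    {R : ℝ} (hR : 0 < R) : UniqueDiffOn ℝ (closedBall x R) :=
  uniqueDiffOn_convex (convex_closedBall x R) <| by
    rw [interior_closedBall x hR.ne']
    exact nonempty_ball.2 hR

theorem le_pow_sub_mul_of_le_mul_succ {a : ℕ → ℝ} {b : ℝ} (hb : 0 ≤ b) {k : ℕ}
    (h : ∀ j < k, a j ≤ b * a (j + 1)) {l : ℕ} (hl : l ≤ k) : a l ≤ b ^ (k - l) * a k := by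
  induction hl using Nat.decreasingInduction with
  | self => simp
  | of_succ j hj ih =>
    calc a j ≤ b * (b ^ (k - (j + 1)) * a k) := (h j hj).trans (mul_le_mul_of_nonneg_left ih hb)
      _ = b ^ (k - j) * a k := by
        rw [← mul_assoc, ← pow_succ', show k - (j + 1) + 1 = k - j by omega]

section Seminorms

variable {n : ℕ} {s : Set (EuclideanSpace ℝ (Fin n))} {g : EuclideanSpace ℝ (Fin n) → ℝ}

theorem supN_nonneg : 0 ≤ supN s g :=
  Real.sSup_nonneg <| by rintro _ ⟨x, -, rfl⟩; exact abs_nonneg _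

theorem abs_le_supN (hs : IsCompact s) (hg : ContinuousOn g s) {x : EuclideanSpace ℝ (Fin n)}
    (hx : x ∈ s) : |g x| ≤ supN s g :=
  le_csSup (hs.bddAbove_image hg.abs) (Set.mem_image_of_mem _ hx)

theorem supN_le {a : ℝ} (ha : 0 ≤ a) (h : ∀ x ∈ s, |g x| ≤ a) : supN s g ≤ a :=
  Real.sSup_le (by rintro _ ⟨x, hx, rfl⟩; exact h x hx) ha

theorem holdN_nonneg (α : ℝ) : 0 ≤ holdN α s g :=
  Real.sSup_nonneg <| by rintro _ ⟨x, -, y, -, -, rfl⟩; positivity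

theorem holdN_le_of_abs_sub_le {α M D : ℝ} (hα : α ≤ 1) (hM : 0 ≤ M) (hD₀ : 0 ≤ D)
    (hD : ∀ x ∈ s, ∀ y ∈ s, ‖x - y‖ ≤ D) (hg : ∀ x ∈ s, ∀ y ∈ s, |g x - g y| ≤ M * ‖x - y‖) :
    holdN α s g ≤ M * D ^ (1 - α) := by
  refine Real.sSup_le ?_ (by positivity)
  rintro _ ⟨x, hx, y, hy, hxy, rfl⟩
  have hpos : 0 < ‖x - y‖ := norm_pos_iff.2 (sub_ne_zero.2 hxy)
  rw [div_le_iff₀ (Real.rpow_pos_of_pos hpos α)]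
  calc |g x - g y| ≤ M * ‖x - y‖ := hg x hx y hy
    _ = M * ‖x - y‖ ^ (1 - α) * ‖x - y‖ ^ α := by
        rw [mul_assoc, ← Real.rpow_add hpos, sub_add_cancel, Real.rpow_one]
    _ ≤ M * D ^ (1 - α) * ‖x - y‖ ^ α := by
        gcongr
        exact hD x hx y hy

end Seminorms

section Derivatives

variable {n k : ℕ} {R α : ℝ} {f : EuclideanSpace ℝ (Fin n) → ℝ}

local notation "B" => closedBall (0 : EuclideanSpace ℝ (Fin n)) R

theorem jNorm_nonneg (hR : 0 ≤ R) (j : ℕ) : 0 ≤ jNorm n R α j f :=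
  Real.iSup_nonneg fun _ => add_nonneg supN_nonneg
    (mul_nonneg (Real.rpow_nonneg hR α) (holdN_nonneg α))

theorem supN_le_jNorm (hR : 0 ≤ R) {j : ℕ} (v : Fin j → Fin n) :
    supN B (derivMulti j v f B) ≤ jNorm n R α j f :=
  (le_add_of_nonneg_right (mul_nonneg (Real.rpow_nonneg hR α) (holdN_nonneg α))).trans <|
    le_ciSup (f := fun w : Fin j → Fin n =>
      supN B (derivMulti j w f B) + R ^ α * holdN α B (derivMulti j w f B))
      (Set.finite_range _).bddAbove v

theorem abs_derivMulti_le_jNorm (hR : 0 < R) (hf : ContDiffOn ℝ k f B) {j : ℕ} (hj : j ≤ k)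
    (v : Fin j → Fin n) {x : EuclideanSpace ℝ (Fin n)} (hx : x ∈ B) :
    |derivMulti j v f B x| ≤ jNorm n R α j f := by
  have hcont : ContinuousOn (derivMulti j v f B) B :=
    (continuous_eval_const _).comp_continuousOn
      (hf.continuousOn_iteratedFDerivWithin (by exact_mod_cast hj) (uniqueDiffOn_closedBall 0 hR))
  exact (abs_le_supN (isCompact_closedBall 0 R) hcont hx).trans (supN_le_jNorm hR.le v)

theorem norm_iteratedFDerivWithin_le_jNorm (hR : 0 < R) (hf : ContDiffOn ℝ k f B) {j : ℕ}
    (hj : j ≤ k) {x : EuclideanSpace ℝ (Fin n)} (hx : x ∈ B) :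
    ‖iteratedFDerivWithin ℝ j f B x‖ ≤ (n : ℝ) ^ j * jNorm n R α j f := by
  simpa using (iteratedFDerivWithin ℝ j f B x).norm_le_card_pow_mul_of_apply_single_le
    (jNorm_nonneg hR.le j) fun w => abs_derivMulti_le_jNorm hR hf hj w hx

theorem abs_derivMulti_sub_le (hR : 0 < R) (hf : ContDiffOn ℝ k f B) {j : ℕ} (hj : j < k)
    (v : Fin j → Fin n) {x y : EuclideanSpace ℝ (Fin n)} (hx : x ∈ B) (hy : y ∈ B) :
    |derivMulti j v f B x - derivMulti j v f B y| ≤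
      (n : ℝ) ^ (j + 1) * jNorm n R α (j + 1) f * ‖x - y‖ := by
  have hmvt := (convex_closedBall _ _).norm_image_sub_le_of_norm_fderivWithin_le
    (hf.differentiableOn_iteratedFDerivWithin (by exact_mod_cast hj) (uniqueDiffOn_closedBall 0 hR))
    (fun z hz => (norm_fderivWithin_iteratedFDerivWithin).trans_le
      (norm_iteratedFDerivWithin_le_jNorm (α := α) hR hf hj hz)) hy hx
  calc |derivMulti j v f B x - derivMulti j v f B y|
      = ‖(iteratedFDerivWithin ℝ j f B x - iteratedFDerivWithin ℝ j f B y) fun i => ee (v i)‖ := rfl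
    _ ≤ ‖iteratedFDerivWithin ℝ j f B x - iteratedFDerivWithin ℝ j f B y‖ * ∏ i, ‖ee (v i)‖ :=
        ContinuousMultilinearMap.le_opNorm _ _
    _ = ‖iteratedFDerivWithin ℝ j f B x - iteratedFDerivWithin ℝ j f B y‖ := by simp [ee]
    _ ≤ _ := hmvt

theorem jNorm_le_mul_jNorm_succ (hα₀ : 0 ≤ α) (hα₁ : α ≤ 1) (hR : 0 < R) (hf : ContDiffOn ℝ k f B)
    {j : ℕ} (hj : j < k) (h₀ : ∀ v : Fin j → Fin n, derivMulti j v f B 0 = 0) :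
    jNorm n R α j f ≤ 3 * (n : ℝ) ^ (j + 1) * R * jNorm n R α (j + 1) f := by
  have hnonneg := jNorm_nonneg (α := α) (f := f) hR.le (j + 1)
  set M := (n : ℝ) ^ (j + 1) * jNorm n R α (j + 1) f
  have hM : 0 ≤ M := by positivity
  have hnorm : ∀ x ∈ B, ‖x‖ ≤ R := fun x hx => mem_closedBall_zero_iff.1 hx
  have hscale : R ^ α * (2 * R) ^ (1 - α) ≤ 2 * R :=
    calc R ^ α * (2 * R) ^ (1 - α) = (2 : ℝ) ^ (1 - α) * R := by
          rw [Real.mul_rpow zero_le_two hR.le, mul_left_comm, ← Real.rpow_add hR, add_sub_cancel,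
            Real.rpow_one]
      _ ≤ (2 : ℝ) ^ (1 : ℝ) * R := by gcongr <;> linarith
      _ = 2 * R := by rw [Real.rpow_one]
  refine Real.iSup_le (fun v => ?_) (by positivity)
  have hlip := fun x (hx : x ∈ B) y (hy : y ∈ B) => abs_derivMulti_sub_le (α := α) hR hf hj v hx hy
  have hsup : supN B (derivMulti j v f B) ≤ M * R := supN_le (by positivity) fun x hx =>
    calc |derivMulti j v f B x| = |derivMulti j v f B x - derivMulti j v f B 0| := by
          rw [h₀ v, sub_zero]
      _ ≤ M * ‖x - 0‖ := hlip x hx 0 (mem_closedBall_self hR.le)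
      _ ≤ M * R := by rw [sub_zero]; exact mul_le_mul_of_nonneg_left (hnorm x hx) hM
  have hhold : holdN α B (derivMulti j v f B) ≤ M * (2 * R) ^ (1 - α) :=
    holdN_le_of_abs_sub_le hα₁ hM (by positivity)
      (fun x hx y hy => (norm_sub_le x y).trans (by linarith [hnorm x hx, hnorm y hy])) hlip
  calc supN B (derivMulti j v f B) + R ^ α * holdN α B (derivMulti j v f B)
      ≤ M * R + M * (R ^ α * (2 * R) ^ (1 - α)) := by
        rw [mul_left_comm]; gcongr
    _ ≤ M * R + M * (2 * R) := by gcongr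
    _ = 3 * (n : ℝ) ^ (j + 1) * R * jNorm n R α (j + 1) f := by ring

end Derivatives

theorem stmt_8 (n k : ℕ) (α : ℝ) (hα0 : 0 < α) (hα1 : α < 1) :
    ∃ C > 0, ∀ R : ℝ, 0 < R → ∀ f : EuclideanSpace ℝ (Fin n) → ℝ,
      ContDiffOn ℝ k f (closedBall (0 : EuclideanSpace ℝ (Fin n)) R) →
      -- f is of class C^{k,α}: the k-th order Hölder quotients are bounded
      (∀ v : Fin k → Fin n,
        BddAbove {c | ∃ x ∈ closedBall (0 : EuclideanSpace ℝ (Fin n)) R,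
          ∃ y ∈ closedBall (0 : EuclideanSpace ℝ (Fin n)) R, x ≠ y ∧
            c = |derivMulti k v f (closedBall 0 R) x - derivMulti k v f (closedBall 0 R) y| /
                ‖x - y‖ ^ α}) →
      -- all derivatives of order ≤ k-1 vanish at the origin
      (∀ m : ℕ, m < k → ∀ v : Fin m → Fin n,
        derivMulti m v f (closedBall 0 R) 0 = 0) →
      ∀ l : ℕ, l ≤ k →
        jNorm n R α l f ≤ C * R ^ (k - l) * jNorm n R α k f := by
  set c : ℝ := 3 * ((n : ℝ) + 1) ^ k with hc_def
  have hn : (1 : ℝ) ≤ n + 1 := by linarith [n.cast_nonneg (α := ℝ)]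
  have hc : 1 ≤ c := by linarith [one_le_pow₀ (n := k) hn]
  refine ⟨c ^ k, by positivity, fun R hR f hf _ hvan l hl => ?_⟩
  have hstep : ∀ j < k, jNorm n R α j f ≤ c * R * jNorm n R α (j + 1) f := fun j hj => by
    have hpow : (n : ℝ) ^ (j + 1) ≤ ((n : ℝ) + 1) ^ k :=
      (pow_le_pow_left₀ n.cast_nonneg (by linarith) _).trans (pow_le_pow_right₀ hn hj)
    have hcoeff : 3 * (n : ℝ) ^ (j + 1) ≤ c := by rw [hc_def]; linarith
    have hnonneg := jNorm_nonneg (α := α) (f := f) hR.le (j + 1)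
    calc jNorm n R α j f ≤ 3 * (n : ℝ) ^ (j + 1) * R * jNorm n R α (j + 1) f :=
          jNorm_le_mul_jNorm_succ hα0.le hα1.le hR hf hj (hvan j hj)
      _ ≤ c * R * jNorm n R α (j + 1) f := by gcongr
  calc jNorm n R α l f ≤ (c * R) ^ (k - l) * jNorm n R α k f :=
        le_pow_sub_mul_of_le_mul_succ (by positivity) hstep hl
    _ = c ^ (k - l) * R ^ (k - l) * jNorm n R α k f := by rw [mul_pow]
    _ ≤ c ^ k * R ^ (k - l) * jNorm n R α k f := by
        have hnonneg := jNorm_nonneg (α := α) (f := f) hR.le k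
        gcongr
        exact k.sub_le l
end
end

section
/- Let n ≥ 3 and suppose u ∈ C^{2}(B_R) is a positive radial-value-at-origin solution of Δu = u^{(n+2)/(n−2)} with u > 0 on B_R ⊂ ℝ^n. Then R ≤ n · u(0)^{−2/(n−2)}. (Osserman-type bound: the radius of existence is controlled by the value at the center.) -/
open MeasureTheory Metric

noncomputable section

open Filter Topology Set InnerProductSpace Laplacian Module
open scoped RealInnerProductSpace

/-!
The Loewner–Nirenberg function `w(x) = (n(n-2)ρ²)^((n-2)/4) (ρ² - ‖x‖²)^(-(n-2)/2)` solves
`Δw = w^p`, `p = (n+2)/(n-2)`, on the ball of radius `ρ` and blows up at its boundary. If `u > w`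
somewhere, the blow-up keeps the maximum of `u - w` inside the ball, and there
`u^p = Δu ≤ Δw = w^p` contradicts `u > w`. So `u ≤ w`, and for every `ρ < R`,
`u(0) ≤ w(0) = (n(n-2))^((n-2)/4) ρ^(-(n-2)/2)`, i.e. `ρ ≤ √(n(n-2)) u(0)^(-2/(n-2))`.
-/

theorem IsLocalMax.nonpos_of_hasDerivAt_of_hasDerivAt {g g' : ℝ → ℝ} {a b : ℝ}
    (hg : ∀ᶠ t in 𝓝 a, HasDerivAt g (g' t) t) (hg' : HasDerivAt g' b a)
    (hmax : IsLocalMax g a) : b ≤ 0 := by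
  by_contra! hb
  -- Then `a` is also a local minimum, so `g` is locally constant and `b = 0`.
  have hderiv : deriv g =ᶠ[𝓝 a] g' := hg.mono fun t ht => ht.deriv
  have hmin : IsLocalMin g a :=
    isLocalMin_of_deriv_deriv_pos (by rwa [hderiv.deriv_eq, hg'.deriv])
      hmax.deriv_eq_zero hg.self_of_nhds.continuousAt
  have hconst : g =ᶠ[𝓝 a] fun _ => g a := (hmax.and hmin).mono fun _ ht => le_antisymm ht.1 ht.2
  have hzero : g' =ᶠ[𝓝 a] fun _ => 0 := by
    filter_upwards [hderiv.symm.trans hconst.deriv] with t ht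
    simpa using ht
  exact hb.ne' (hg'.unique ((hasDerivAt_const a 0).congr_of_eventuallyEq hzero))

section Line

variable {E : Type*} [NormedAddCommGroup E] [NormedSpace ℝ E]

theorem hasDerivAt_add_smul (x v : E) (t : ℝ) : HasDerivAt (fun s : ℝ => x + s • v) v t := by
  simpa using ((hasDerivAt_id t).smul_const v).const_add x

theorem ContDiffAt.eventually_hasDerivAt_comp_add_smul {f : E → ℝ} {x : E} (v : E)
    (hf : ContDiffAt ℝ 2 f x) :
    ∀ᶠ t in 𝓝 (0 : ℝ), HasDerivAt (fun s => f (x + s • v)) (fderiv ℝ f (x + t • v) v) t := by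
  have hline : Tendsto (fun t : ℝ => x + t • v) (𝓝 0) (𝓝 x) := by
    simpa using (hasDerivAt_add_smul x v 0).continuousAt.tendsto
  filter_upwards [hline.eventually (hf.eventually (by simp))] with t ht
  exact (ht.differentiableAt (by norm_num)).hasFDerivAt.comp_hasDerivAt t
    (hasDerivAt_add_smul x v t)

theorem ContDiffAt.hasDerivAt_fderiv_comp_add_smul {f : E → ℝ} {x : E} (v : E)
    (hf : ContDiffAt ℝ 2 f x) :
    HasDerivAt (fun t : ℝ => fderiv ℝ f (x + t • v) v) (fderiv ℝ (fderiv ℝ f) x v v) 0 := by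
  have hdf : HasFDerivAt (fderiv ℝ f) (fderiv ℝ (fderiv ℝ f) x) (x + (0 : ℝ) • v) := by
    simpa using ((hf.fderiv_right one_add_one_eq_two.le).differentiableAt one_ne_zero).hasFDerivAt
  exact (ContinuousLinearMap.apply ℝ ℝ v).hasFDerivAt.comp_hasDerivAt 0
    (hdf.comp_hasDerivAt 0 (hasDerivAt_add_smul x v 0))

theorem IsLocalMax.iteratedFDeriv_two_nonpos {f : E → ℝ} {x : E} (v : E)
    (hf : ContDiffAt ℝ 2 f x) (hmax : IsLocalMax f x) :
    iteratedFDeriv ℝ 2 f x ![v, v] ≤ 0 := by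
  rw [iteratedFDeriv_two_apply]
  refine IsLocalMax.nonpos_of_hasDerivAt_of_hasDerivAt (hf.eventually_hasDerivAt_comp_add_smul v)
    (hf.hasDerivAt_fderiv_comp_add_smul v) ?_
  exact IsLocalMax.comp_continuous (by simpa using hmax) (hasDerivAt_add_smul x v 0).continuousAt

theorem ContDiffAt.iteratedFDeriv_two_eq_of_hasDerivAt {f : E → ℝ} {x v : E} {g' : ℝ → ℝ}
    {b : ℝ} (hf : ContDiffAt ℝ 2 f x)
    (hg : ∀ᶠ t in 𝓝 (0 : ℝ), HasDerivAt (fun s => f (x + s • v)) (g' t) t)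
    (hg' : HasDerivAt g' b 0) :
    iteratedFDeriv ℝ 2 f x ![v, v] = b := by
  have heq : (fun t : ℝ => fderiv ℝ f (x + t • v) v) =ᶠ[𝓝 0] g' := by
    filter_upwards [hf.eventually_hasDerivAt_comp_add_smul v, hg] with t h₁ h₂
    exact h₁.unique h₂
  rw [iteratedFDeriv_two_apply]
  exact ((hf.hasDerivAt_fderiv_comp_add_smul v).congr_of_eventuallyEq heq.symm).unique hg'

end Line

theorem IsLocalMax.laplacian_nonpos {E : Type*} [NormedAddCommGroup E] [InnerProductSpace ℝ E]
    [FiniteDimensional ℝ E] {f : E → ℝ} {x : E} (hf : ContDiffAt ℝ 2 f x)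
    (hmax : IsLocalMax f x) : Δ f x ≤ 0 := by
  rw [laplacian_eq_iteratedFDeriv_stdOrthonormalBasis]
  exact Finset.sum_nonpos fun i _ => hmax.iteratedFDeriv_two_nonpos _ hf

section Barrier

variable {E : Type*} [NormedAddCommGroup E]

def loewnerNirenberg (n : ℕ) (ρ : ℝ) (x : E) : ℝ :=
  ((n : ℝ) * (n - 2) * ρ ^ 2) ^ (((n : ℝ) - 2) / 4) * (ρ ^ 2 - ‖x‖ ^ 2) ^ (-(((n : ℝ) - 2) / 2))

theorem exists_lt_forall_norm_eq_le_loewnerNirenberg {n : ℕ} (hn : 2 < n) {ρ r₀ : ℝ}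
    (hr₀ : 0 ≤ r₀) (hr₀ρ : r₀ < ρ) (M : ℝ) :
    ∃ r, r₀ < r ∧ r < ρ ∧ ∀ x : E, ‖x‖ = r → M ≤ loewnerNirenberg n ρ x := by
  have hn' : (0 : ℝ) < n - 2 := sub_pos.2 (by exact_mod_cast hn)
  have hρ : 0 < ρ := hr₀.trans_lt hr₀ρ
  have hK : Tendsto (fun s : ℝ => ρ ^ 2 - s ^ 2) (𝓝[<] ρ) (𝓝[>] 0) := by
    refine tendsto_nhdsWithin_iff.2 ⟨?_, ?_⟩
    · exact tendsto_nhdsWithin_of_tendsto_nhds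
        ((by fun_prop : Continuous fun s : ℝ => ρ ^ 2 - s ^ 2).tendsto' ρ 0 (by simp))
    · filter_upwards [Ioo_mem_nhdsLT hρ] with s hs
      exact sub_pos.2 (pow_lt_pow_left₀ hs.2 hs.1.le two_ne_zero)
  have hblowup : Tendsto (fun s : ℝ => ((n : ℝ) * (n - 2) * ρ ^ 2) ^ (((n : ℝ) - 2) / 4) *
      (ρ ^ 2 - s ^ 2) ^ (-(((n : ℝ) - 2) / 2))) (𝓝[<] ρ) atTop :=
    ((tendsto_rpow_neg_nhdsGT_zero (by linarith)).comp hK).const_mul_atTop (by positivity)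
  obtain ⟨r, hM, hr⟩ := ((hblowup.eventually_ge_atTop M).and (Ioo_mem_nhdsLT hr₀ρ)).exists
  exact ⟨r, hr.1, hr.2, fun x hx => by simpa only [loewnerNirenberg, hx] using hM⟩

theorem loewnerNirenberg_zero_rpow {n : ℕ} (hn : 2 < n) {ρ : ℝ} (hρ : 0 < ρ) :
    loewnerNirenberg n ρ (0 : E) ^ (4 / ((n : ℝ) - 2)) = n * (n - 2) / ρ ^ 2 := by
  have hn' : (0 : ℝ) < n - 2 := sub_pos.2 (by exact_mod_cast hn)
  have hD : (0 : ℝ) < n * (n - 2) := by positivity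
  have hρ2 : (0 : ℝ) < ρ ^ 2 := by positivity
  have h1 : ((n : ℝ) - 2) / 4 * (4 / ((n : ℝ) - 2)) = 1 := by field_simp
  have h2 : -(((n : ℝ) - 2) / 2) * (4 / ((n : ℝ) - 2)) = -1 - 1 := by field_simp; ring
  rw [loewnerNirenberg, norm_zero, zero_pow two_ne_zero, sub_zero,
    Real.mul_rpow (by positivity) (by positivity), ← Real.rpow_mul (by positivity),
    ← Real.rpow_mul hρ2.le, Real.mul_rpow hD.le hρ2.le, h1, h2, Real.rpow_one, Real.rpow_one,
    Real.rpow_sub hρ2, Real.rpow_one, Real.rpow_neg_one]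
  field_simp

theorem le_mul_rpow_of_le_loewnerNirenberg_zero {n : ℕ} (hn : 2 < n) {ρ a : ℝ} (hρ : 0 < ρ)
    (ha : 0 < a) (h : a ≤ loewnerNirenberg n ρ (0 : E)) :
    ρ ≤ n * a ^ (-2 / ((n : ℝ) - 2)) := by
  have hn' : (0 : ℝ) < n - 2 := sub_pos.2 (by exact_mod_cast hn)
  set s := a ^ (-2 / ((n : ℝ) - 2))
  have hs : 0 < s := Real.rpow_pos_of_pos ha _
  have key : (s ^ 2)⁻¹ ≤ n * (n - 2) / ρ ^ 2 := calc
    (s ^ 2)⁻¹ = a ^ (4 / ((n : ℝ) - 2)) := by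
      rw [← Real.rpow_natCast, ← Real.rpow_mul ha.le, ← Real.rpow_neg_one, ← Real.rpow_mul ha.le]
      congr 1
      field_simp
      norm_num
    _ ≤ loewnerNirenberg n ρ (0 : E) ^ (4 / ((n : ℝ) - 2)) :=
      Real.rpow_le_rpow ha.le h (by positivity)
    _ = n * (n - 2) / ρ ^ 2 := loewnerNirenberg_zero_rpow hn hρ
  have hsq : ρ ^ 2 ≤ (n * s) ^ 2 := by
    rw [inv_le_iff_one_le_mul₀ (by positivity), div_mul_eq_mul_div,
      one_le_div₀ (by positivity)] at key
    nlinarith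
  exact (pow_le_pow_iff_left₀ hρ.le (by positivity) two_ne_zero).1 hsq

variable [InnerProductSpace ℝ E]

theorem contDiffAt_mul_rpow_sub_norm_sq {c ρ m : ℝ} {x : E} (hx : ‖x‖ < ρ) :
    ContDiffAt ℝ 2 (fun y : E => c * (ρ ^ 2 - ‖y‖ ^ 2) ^ (-m)) x := by
  have hK : ρ ^ 2 - ‖x‖ ^ 2 ≠ 0 := by nlinarith [norm_nonneg x]
  exact contDiffAt_const.mul
    ((contDiffAt_const.sub (contDiffAt_id.norm_sq ℝ)).rpow_const_of_ne hK)

theorem iteratedFDeriv_two_mul_rpow_sub_norm_sq {c ρ m : ℝ} {x : E} (hx : ‖x‖ < ρ) (v : E) :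
    iteratedFDeriv ℝ 2 (fun y : E => c * (ρ ^ 2 - ‖y‖ ^ 2) ^ (-m)) x ![v, v] =
      c * m * (4 * (m + 1) * ⟪x, v⟫ ^ 2 * (ρ ^ 2 - ‖x‖ ^ 2) ^ (-m - 2)
        + 2 * ‖v‖ ^ 2 * (ρ ^ 2 - ‖x‖ ^ 2) ^ (-m - 1)) := by
  set K : ℝ → ℝ := fun t => ρ ^ 2 - ‖x + t • v‖ ^ 2
  set K' : ℝ → ℝ := fun t => -(2 * ⟪x + t • v, v⟫)
  have hK : ∀ t, HasDerivAt K (K' t) t := fun t => by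
    simpa [K, K'] using ((hasDerivAt_add_smul x v t).norm_sq).const_sub (ρ ^ 2)
  have hK' : HasDerivAt K' (-(2 * ‖v‖ ^ 2)) 0 := by
    have := (((hasDerivAt_add_smul x v 0).inner ℝ (hasDerivAt_const 0 v)).const_mul 2).neg
    exact this.congr_deriv (by simp)
  have hK0 : K 0 = ρ ^ 2 - ‖x‖ ^ 2 := by simp [K]
  have hK0pos : 0 < K 0 := by rw [hK0]; nlinarith [norm_nonneg x]
  have hKpos : ∀ᶠ t in 𝓝 0, 0 < K t := (hK 0).continuousAt.eventually (lt_mem_nhds hK0pos)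
  refine (contDiffAt_mul_rpow_sub_norm_sq hx).iteratedFDeriv_two_eq_of_hasDerivAt
    (g' := fun t => c * (-m * (K t ^ (-m - 1) * K' t))) ?_ ?_
  · filter_upwards [hKpos] with t ht
    exact (((Real.hasDerivAt_rpow_const (Or.inl ht.ne')).comp t (hK t)).const_mul c).congr_deriv
      (by ring)
  · have hpow := (Real.hasDerivAt_rpow_const (p := -m - 1) (Or.inl hK0pos.ne')).comp 0 (hK 0)
    refine (((hpow.mul hK').const_mul (-m)).const_mul c).congr_deriv ?_
    simp only [Function.comp_apply, K', hK0, zero_smul, add_zero]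
    ring_nf

theorem laplacian_mul_rpow_sub_norm_sq [FiniteDimensional ℝ E] {c ρ m : ℝ} {x : E}
    (hx : ‖x‖ < ρ) :
    Δ (fun y : E => c * (ρ ^ 2 - ‖y‖ ^ 2) ^ (-m)) x =
      c * m * (4 * (m + 1) * ‖x‖ ^ 2 * (ρ ^ 2 - ‖x‖ ^ 2) ^ (-m - 2)
        + 2 * finrank ℝ E * (ρ ^ 2 - ‖x‖ ^ 2) ^ (-m - 1)) := by
  rw [laplacian_eq_iteratedFDeriv_stdOrthonormalBasis]
  simp only [iteratedFDeriv_two_mul_rpow_sub_norm_sq hx, OrthonormalBasis.norm_eq_one]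
  rw [← Finset.mul_sum, Finset.sum_add_distrib, ← Finset.sum_mul, ← Finset.sum_mul,
    ← Finset.mul_sum, (stdOrthonormalBasis ℝ E).sum_sq_inner_left]
  simp only [one_pow, mul_one, Finset.sum_const, Finset.card_univ, Fintype.card_fin, nsmul_eq_mul]
  ring

theorem laplacian_loewnerNirenberg [FiniteDimensional ℝ E] {n : ℕ} (hE : finrank ℝ E = n)
    (hn : 2 < n) {ρ : ℝ} {x : E} (hx : ‖x‖ < ρ) :
    Δ (loewnerNirenberg n ρ : E → ℝ) x =
      loewnerNirenberg n ρ x ^ (((n : ℝ) + 2) / ((n : ℝ) - 2)) := by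
  -- With `m = (n-2)/2` and `p = (n+2)/(n-2)`: `m p = m + 2`, `4 m (m + 1) = n (n - 2)`,
  -- and the constant `c = D^((n-2)/4)` satisfies `c^(p-1) = D`.
  have hn' : (0 : ℝ) < n - 2 := sub_pos.2 (by exact_mod_cast hn)
  set m : ℝ := ((n : ℝ) - 2) / 2
  set D : ℝ := (n : ℝ) * (n - 2) * ρ ^ 2
  set K : ℝ := ρ ^ 2 - ‖x‖ ^ 2
  have hD : 0 < D := by have := (norm_nonneg x).trans_lt hx; positivity
  have hK : 0 < K := by nlinarith [norm_nonneg x]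
  have hpow : (D ^ (((n : ℝ) - 2) / 4) * K ^ (-m)) ^ (((n : ℝ) + 2) / ((n : ℝ) - 2)) =
      D ^ (((n : ℝ) - 2) / 4) * D * K ^ (-m - 2) := by
    rw [Real.mul_rpow (by positivity) (by positivity), ← Real.rpow_mul hD.le,
      ← Real.rpow_mul hK.le, ← Real.rpow_add_one hD.ne']
    congr 2 <;> field_simp [m] <;> ring
  change Δ (fun y : E => D ^ (((n : ℝ) - 2) / 4) * (ρ ^ 2 - ‖y‖ ^ 2) ^ (-m)) x =
    (D ^ (((n : ℝ) - 2) / 4) * K ^ (-m)) ^ (((n : ℝ) + 2) / ((n : ℝ) - 2))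
  rw [laplacian_mul_rpow_sub_norm_sq hx, hE, hpow,
    show -m - 1 = (-m - 2) + 1 by ring, Real.rpow_add_one hK.ne']
  ring

theorem le_loewnerNirenberg_of_rpow_le_laplacian [FiniteDimensional ℝ E] {n : ℕ}
    (hE : finrank ℝ E = n) (hn : 2 < n) {ρ : ℝ} {u : E → ℝ}
    (hu : ∀ x ∈ ball (0 : E) ρ, ContDiffAt ℝ 2 u x) (hbdd : BddAbove (u '' ball 0 ρ))
    (hsub : ∀ x ∈ ball (0 : E) ρ, u x ^ (((n : ℝ) + 2) / ((n : ℝ) - 2)) ≤ Δ u x)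
    {x : E} (hx : x ∈ ball 0 ρ) : u x ≤ loewnerNirenberg n ρ x := by
  have hn' : (0 : ℝ) < n - 2 := sub_pos.2 (by exact_mod_cast hn)
  set w : E → ℝ := loewnerNirenberg n ρ
  obtain ⟨M, hM⟩ := hbdd
  -- On the sphere `‖y‖ = r` we have `u ≤ M ≤ w`, so a maximum of `u - w` with `u > w` is interior.
  obtain ⟨r, hxr, hrρ, hwM⟩ :=
    exists_lt_forall_norm_eq_le_loewnerNirenberg (E := E) hn (norm_nonneg x)
      (mem_ball_zero_iff.1 hx) M
  have hball : closedBall (0 : E) r ⊆ ball 0 ρ := closedBall_subset_ball hrρ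
  have hw : ∀ y ∈ ball (0 : E) ρ, ContDiffAt ℝ 2 w y := fun y hy =>
    contDiffAt_mul_rpow_sub_norm_sq (mem_ball_zero_iff.1 hy)
  have hcont : ContinuousOn (u - w) (closedBall 0 r) := fun y hy =>
    ((hu y (hball hy)).sub (hw y (hball hy))).continuousAt.continuousWithinAt
  have hxr' : x ∈ closedBall (0 : E) r := mem_closedBall_zero_iff.2 hxr.le
  obtain ⟨x₀, hx₀, hmax⟩ := (isCompact_closedBall (0 : E) r).exists_isMaxOn ⟨x, hxr'⟩ hcont
  suffices u x₀ ≤ w x₀ by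
    have : (u - w) x ≤ (u - w) x₀ := hmax hxr'
    simp only [Pi.sub_apply] at this
    linarith
  by_contra! hlt
  have hx₀r : ‖x₀‖ < r := (mem_closedBall_zero_iff.1 hx₀).lt_of_ne fun h =>
    hlt.not_ge ((hM ⟨x₀, hball hx₀, rfl⟩).trans (hwM x₀ h))
  have hx₀ρ := hball hx₀
  have hloc : IsLocalMax (u - w) x₀ := hmax.isLocalMax
    (mem_of_superset (isOpen_ball.mem_nhds (mem_ball_zero_iff.2 hx₀r)) ball_subset_closedBall)
  have hlap : Δ (u - w) x₀ ≤ 0 := hloc.laplacian_nonpos ((hu x₀ hx₀ρ).sub (hw x₀ hx₀ρ))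
  rw [(hu x₀ hx₀ρ).laplacian_sub (hw x₀ hx₀ρ),
    laplacian_loewnerNirenberg hE hn (mem_ball_zero_iff.1 hx₀ρ)] at hlap
  have hw₀ : 0 ≤ w x₀ := mul_nonneg (Real.rpow_nonneg (by positivity) _)
    (Real.rpow_nonneg (by nlinarith [mem_ball_zero_iff.1 hx₀ρ, norm_nonneg x₀]) _)
  have := Real.rpow_lt_rpow hw₀ hlt (by positivity : (0 : ℝ) < ((n : ℝ) + 2) / ((n : ℝ) - 2))
  linarith [hsub x₀ hx₀ρ]

end Barrier

theorem sum_iteratedFDerivWithin_ee_eq_laplacian {n : ℕ} {s : Set (EuclideanSpace ℝ (Fin n))}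
    (hs : IsOpen s) (u : EuclideanSpace ℝ (Fin n) → ℝ) {x : EuclideanSpace ℝ (Fin n)}
    (hx : x ∈ s) :
    ∑ i : Fin n, iteratedFDerivWithin ℝ 2 u s x (fun _ => ee i) = Δ u x := by
  rw [laplacian_eq_iteratedFDeriv_orthonormalBasis u (EuclideanSpace.basisFun (Fin n) ℝ)]
  refine Finset.sum_congr rfl fun i _ => ?_
  rw [iteratedFDerivWithin_of_isOpen 2 hs hx]
  congr 1
  ext j
  fin_cases j <;> simp [ee]

theorem stmt_18 (n : ℕ) (hn : 3 ≤ n) (R : ℝ) (hR : 0 < R)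
    (u : EuclideanSpace ℝ (Fin n) → ℝ)
    (hu : ContDiffOn ℝ 2 u (ball (0 : EuclideanSpace ℝ (Fin n)) R))
    (hpos : ∀ x ∈ ball (0 : EuclideanSpace ℝ (Fin n)) R, 0 < u x)
    (heq : ∀ x ∈ ball (0 : EuclideanSpace ℝ (Fin n)) R,
      (∑ i : Fin n,
          iteratedFDerivWithin ℝ 2 u (ball (0 : EuclideanSpace ℝ (Fin n)) R) x
            (fun _ => ee i))
        = u x ^ (((n : ℝ) + 2) / ((n : ℝ) - 2))) :
    R ≤ n * u 0 ^ (-(2 : ℝ) / ((n : ℝ) - 2)) := by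
  have hn' : 2 < n := by omega
  have hu₀ : 0 < u 0 := hpos 0 (mem_ball_self hR)
  refine le_of_forall_lt_imp_le_of_dense fun ρ hρR => ?_
  rcases le_or_gt ρ 0 with hρ | hρ
  · exact hρ.trans (by positivity)
  have hρ_sub : closedBall (0 : EuclideanSpace ℝ (Fin n)) ρ ⊆ ball 0 R :=
    closedBall_subset_ball hρR
  refine le_mul_rpow_of_le_loewnerNirenberg_zero hn' hρ hu₀
    (le_loewnerNirenberg_of_rpow_le_laplacian (finrank_euclideanSpace_fin) hn'
      (fun x hx => hu.contDiffAt (isOpen_ball.mem_nhds (hρ_sub (ball_subset_closedBall hx))))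
      (((isCompact_closedBall 0 ρ).bddAbove_image (hu.continuousOn.mono hρ_sub)).mono
        (image_mono ball_subset_closedBall))
      (fun x hx => ?_) (mem_ball_self hρ))
  have hxR := hρ_sub (ball_subset_closedBall hx)
  rw [← heq x hxR, sum_iteratedFDerivWithin_ee_eq_laplacian isOpen_ball u hxR]
end
end
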